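/- arXiv:1301.5658 — 5 statements merged into one kernel-verified Lean document; each statement's English description precedes it below -/
import Mathlib

section
/- If κ is an uncountable cardinal, the Cantor cube 2^κ is not a sequential space: the set of characteristic functions of at most countable subsets of κ is sequentially closed but not closed. -/
/-! If `xₙ → p` in `ι → X` and `U ⊆ X` is open, then every coordinate `a` with `p a ∈ U` has
`xₙ a ∈ U` for some `n`; hence functions meeting `U` in only countably many coordinates form a
sequentially closed set. On the other hand, functions equal to some `c ∉ U` off a finite set are
dense, so this set is dense; for uncountable `ι` it misses a constant function, so it is not
closed. -/

section CountablePreimage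

variable {ι X : Type*} [TopologicalSpace X]

theorem isSeqClosed_setOf_countable_preimage {U : Set X} (hU : IsOpen U) :
    IsSeqClosed {x : ι → X | {a | x a ∈ U}.Countable} := by
  intro x p hx hp
  have hsub : {a | p a ∈ U} ⊆ ⋃ n, {a | x n a ∈ U} := fun a ha =>
    have ⟨n, hn⟩ := ((tendsto_pi_nhds.mp hp a).eventually (hU.mem_nhds ha)).exists
    Set.mem_iUnion.mpr ⟨n, hn⟩
  exact (Set.countable_iUnion hx).mono hsub

theorem dense_setOf_finite_ne (c : X) : Dense {x : ι → X | {a | x a ≠ c}.Finite} := by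
  classical
  intro x
  rw [mem_closure_iff_nhds]
  intro V hV
  rw [nhds_pi, Filter.mem_pi] at hV
  obtain ⟨I, hI, t, ht, htV⟩ := hV
  refine ⟨fun a => if a ∈ I then x a else c, htV fun a ha => ?_, hI.subset fun a ha => ?_⟩
  · simpa [ha] using mem_of_mem_nhds (ht a)
  · by_contra h
    simp [h] at ha

theorem not_isClosed_setOf_countable_preimage [Uncountable ι] {U : Set X} {c : X}
    (hc : c ∉ U) (hU : U.Nonempty) :
    ¬ IsClosed {x : ι → X | {a | x a ∈ U}.Countable} := by
  intro hclosed
  have hdense : Dense {x : ι → X | {a | x a ∈ U}.Countable} :=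
    (dense_setOf_finite_ne c).mono fun x hx =>
      hx.countable.mono fun a (ha : x a ∈ U) => ne_of_mem_of_not_mem ha hc
  obtain ⟨u, hu⟩ := hU
  have hconst : (fun _ => u : ι → X) ∈ {x : ι → X | {a | x a ∈ U}.Countable} :=
    hclosed.closure_eq ▸ hdense _
  exact not_countable (Set.countable_univ_iff.mp (by simpa [hu] using hconst))

end CountablePreimage

/-- For uncountable `κ`, the Cantor cube `2^κ` is not sequential: the set of
characteristic functions of at most countable subsets of `κ` is sequentially
closed but not closed. -/
theorem cantorCube_not_sequential {ι : Type*} [Uncountable ι] :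
    IsSeqClosed {x : ι → Bool | Set.Countable {a : ι | x a = true}} ∧
    ¬ IsClosed {x : ι → Bool | Set.Countable {a : ι | x a = true}} ∧
    ¬ SequentialSpace (ι → Bool) := by
  have hseq : IsSeqClosed {x : ι → Bool | {a | x a ∈ ({true} : Set Bool)}.Countable} :=
    isSeqClosed_setOf_countable_preimage (isOpen_discrete _)
  have hnotClosed : ¬ IsClosed {x : ι → Bool | {a | x a ∈ ({true} : Set Bool)}.Countable} :=
    not_isClosed_setOf_countable_preimage (c := false) (by simp) (Set.singleton_nonempty _)
  exact ⟨hseq, hnotClosed, fun _ => hnotClosed hseq.isClosed⟩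
end

section
/- If κ is an uncountable cardinal, then the Aleksandrov cube 2^κ is not a sequential space: the set S = {x ∈ 2^κ : |x^{-1}({0})| ≤ ℵ₀} is dense (hence not closed) but sequentially closed. -/
/-!
Density holds in every product: a basic open set constrains only finitely many coordinates, so it
meets the functions that differ from the constant `true` in finitely many places. Sequential
closedness: if `x n → p` coordinatewise and `p a = 0`, then `{0}` is an open neighbourhood of
`p a`, so `x n a = 0` for some `n`; hence `p⁻¹(0)` lies in the countable union of the
`(x n)⁻¹(0)`. The set misses the constant `0` function, so being dense it is not closed.
-/

/-- The two-point space `{0,1}` with topology `{∅, {0}, {0,1}}`, where `false`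
plays the role of `0` and `true` of `1`. -/
def alexBool : TopologicalSpace Bool := TopologicalSpace.generateFrom {{false}}

/-- The Aleksandrov cube of weight `κ`: the product of `κ` copies of `alexBool`. -/
def alexCube (ι : Type*) : TopologicalSpace (ι → Bool) :=
  @Pi.topologicalSpace ι (fun _ => Bool) (fun _ => alexBool)

section Product

variable {ι : Type*} {X : ι → Type*} [∀ i, TopologicalSpace (X i)]

theorem dense_setOf_finite_ne_s7 (y : ∀ i, X i) : Dense {x : ∀ i, X i | {i | x i ≠ y i}.Finite} := by
  classical
  intro z
  rw [mem_closure_iff]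
  intro O hO hzO
  obtain ⟨I, u, hu, hIu⟩ := isOpen_pi_iff.mp hO z hzO
  refine ⟨I.piecewise z y, hIu fun i hi => ?_, I.finite_toSet.subset fun i hi => ?_⟩
  · rw [I.piecewise_eq_of_mem _ _ hi]
    exact (hu i hi).2
  · by_contra hiI
    exact hi (I.piecewise_eq_of_notMem _ _ hiI)

theorem isSeqClosed_setOf_countable_mem {U : ∀ i, Set (X i)} (hU : ∀ i, IsOpen (U i)) :
    IsSeqClosed {x : ∀ i, X i | {i | x i ∈ U i}.Countable} := by
  intro x p hx hxp
  refine (Set.countable_iUnion hx).mono fun i hi => Set.mem_iUnion.mpr ?_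
  exact ((continuous_apply i).tendsto p |>.comp hxp).eventually_mem ((hU i).mem_nhds hi) |>.exists

end Product

theorem Dense.not_isClosed {X : Type*} [TopologicalSpace X] {s : Set X} (hs : Dense s)
    (hne : s ≠ Set.univ) : ¬IsClosed s :=
  fun h => hne (h.closure_eq ▸ hs.closure_eq)

lemma alexBool_isOpen_singleton_false : @IsOpen Bool alexBool {false} :=
  TopologicalSpace.isOpen_generateFrom_of_mem rfl

/-- For uncountable `κ`, the Aleksandrov cube `2^κ` is not sequential: the set
`S = {x : |x⁻¹({0})| ≤ ℵ₀}` is dense (hence not closed) but sequentially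
closed. -/
theorem alexCube_not_sequential {ι : Type*} [Uncountable ι] :
    @Dense _ (alexCube ι) {x : ι → Bool | Set.Countable {a : ι | x a = false}} ∧
    ¬ @IsClosed _ (alexCube ι) {x : ι → Bool | Set.Countable {a : ι | x a = false}} ∧
    @IsSeqClosed _ (alexCube ι) {x : ι → Bool | Set.Countable {a : ι | x a = false}} ∧
    ¬ @SequentialSpace _ (alexCube ι) := by
  let := alexBool
  have hdense : Dense {x : ι → Bool | {a | x a = false}.Countable} :=
    (dense_setOf_finite_ne_s7 fun _ => true).mono fun x hx => by simpa using hx.countable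
  have hne : {x : ι → Bool | {a | x a = false}.Countable} ≠ Set.univ := fun h => by
    have hfalse : (fun _ : ι => false) ∈ {x : ι → Bool | {a | x a = false}.Countable} :=
      h ▸ Set.mem_univ _
    exact Set.not_countable_univ (by simpa using hfalse)
  have hclosed := hdense.not_isClosed hne
  have hseq : IsSeqClosed {x : ι → Bool | {a | x a = false}.Countable} :=
    isSeqClosed_setOf_countable_mem (U := fun _ => {false})
      fun _ => alexBool_isOpen_singleton_false
  exact ⟨hdense, hclosed, hseq, fun h => hclosed (@IsSeqClosed.isClosed _ _ h _ hseq)⟩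
end

section
/- A set F in a complete Boolean algebra B is closed in the topology O_{λ_ls} if and only if F is upward closed and ⋀_n x_n ∈ F for every decreasing sequence (x_n) in F. Equivalently, F is upward closed and limsup x ∈ F for every sequence x in F. -/
/-- The liminf of a sequence in a complete Boolean algebra. -/
def bLiminf {B : Type*} [CompleteBooleanAlgebra B] (x : ℕ → B) : B :=
  ⨆ k, ⨅ n, ⨅ _ : k ≤ n, x n

/-- The limsup of a sequence in a complete Boolean algebra. -/
def bLimsup {B : Type*} [CompleteBooleanAlgebra B] (x : ℕ → B) : B :=
  ⨅ k, ⨆ n, ⨆ _ : k ≤ n, x n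

/-- The convergence `λ_ls(x) = (limsup x)↑`. -/
def lamLs {B : Type*} [CompleteBooleanAlgebra B] (x : ℕ → B) : Set B :=
  {b : B | bLimsup x ≤ b}

/-- The convergence `λ_li(x) = (liminf x)↓`. -/
def lamLi {B : Type*} [CompleteBooleanAlgebra B] (x : ℕ → B) : Set B :=
  {b : B | b ≤ bLiminf x}

/-- The topology `O_λ` generated by a convergence `λ`: a set is open iff
whenever it meets `λ(x)` it contains all but finitely many terms of `x`. -/
def convTop {X : Type*} (lam : (ℕ → X) → Set X) : TopologicalSpace X where
  IsOpen O := ∀ x : ℕ → X, (O ∩ lam x).Nonempty → ∀ᶠ n in Filter.atTop, x n ∈ O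
  isOpen_univ := fun x _ => Filter.Eventually.of_forall fun _ => Set.mem_univ _
  isOpen_inter := by
    intro s t hs ht x hx
    obtain ⟨a, has, hal⟩ := hx
    exact ((hs x ⟨a, has.1, hal⟩).and (ht x ⟨a, has.2, hal⟩)).mono
      fun n hn => ⟨hn.1, hn.2⟩
  isOpen_sUnion := by
    intro S hS x hx
    obtain ⟨a, haU, hal⟩ := hx
    obtain ⟨O, hOS, haO⟩ := haU
    exact (hS O hOS x ⟨a, haO, hal⟩).mono fun n hn => Set.mem_sUnion.2 ⟨O, hOS, hn⟩

/-!
A set is closed in `O_λ` exactly when `λ x ⊆ F` for every sequence `x` that is frequently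
in `F`. Constant sequences make a closed `F` upward closed, and then the tail suprema
`⨆ n ≥ k, x n` of such an `x` all lie in `F`; they form an antitone sequence with infimum
`limsup x`, so everything reduces to closure under infima of antitone sequences in `F`.
-/

open Filter Topology

section TailSup

variable {α : Type*} [CompleteLattice α]

def tailSup (x : ℕ → α) (k : ℕ) : α :=
  ⨆ n, ⨆ _ : k ≤ n, x n

theorem le_tailSup (x : ℕ → α) {k n : ℕ} (h : k ≤ n) : x n ≤ tailSup x k :=
  le_iSup₂_of_le n h le_rfl

theorem antitone_tailSup (x : ℕ → α) : Antitone (tailSup x) :=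
  fun _ _ hkl => iSup₂_le fun _ hln => le_tailSup x (hkl.trans hln)

theorem tailSup_of_antitone {x : ℕ → α} (hx : Antitone x) (k : ℕ) : tailSup x k = x k :=
  le_antisymm (iSup₂_le fun _ hkn => hx hkn) (le_tailSup x le_rfl)

theorem IsUpperSet.tailSup_mem {F : Set α} (hF : IsUpperSet F) {x : ℕ → α}
    (hx : ∃ᶠ n in atTop, x n ∈ F) (k : ℕ) : tailSup x k ∈ F :=
  let ⟨_, hkn, hn⟩ := frequently_atTop.1 hx k
  hF (le_tailSup x hkn) hn

end TailSup

section BLimsup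

variable {B : Type*} [CompleteBooleanAlgebra B]

theorem bLimsup_eq_iInf_tailSup (x : ℕ → B) : bLimsup x = ⨅ k, tailSup x k := rfl

theorem bLimsup_of_antitone {x : ℕ → B} (hx : Antitone x) : bLimsup x = ⨅ n, x n := by
  simp only [bLimsup_eq_iInf_tailSup, tailSup_of_antitone hx]

theorem bLimsup_tailSup (x : ℕ → B) : bLimsup (tailSup x) = bLimsup x := by
  rw [bLimsup_of_antitone (antitone_tailSup x), bLimsup_eq_iInf_tailSup]

theorem bLimsup_const (a : B) : bLimsup (fun _ : ℕ => a) = a :=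
  (bLimsup_of_antitone antitone_const).trans iInf_const

theorem IsUpperSet.forall_bLimsup_mem_iff {F : Set B} (hF : IsUpperSet F) :
    (∀ x : ℕ → B, (∀ n, x n ∈ F) → bLimsup x ∈ F) ↔
      ∀ x : ℕ → B, (∀ n, x n ∈ F) → Antitone x → (⨅ n, x n) ∈ F := by
  refine ⟨fun h x hxF hx => bLimsup_of_antitone hx ▸ h x hxF, fun h x hxF => ?_⟩
  rw [bLimsup_eq_iInf_tailSup]
  exact h _ (hF.tailSup_mem (Frequently.of_forall hxF)) (antitone_tailSup x)

end BLimsup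

theorem isClosed_convTop_iff {X : Type*} (lam : (ℕ → X) → Set X) (F : Set X) :
    IsClosed[convTop lam] F ↔ ∀ x : ℕ → X, (∃ᶠ n in atTop, x n ∈ F) → lam x ⊆ F := by
  rw [← @isOpen_compl_iff X F (convTop lam)]
  refine forall_congr' fun x => ⟨fun h hfreq b hb => ?_, fun h ⟨b, hbF, hb⟩ => ?_⟩
  · by_contra hbF
    exact hfreq (h ⟨b, hbF, hb⟩)
  · by_contra hev
    exact hbF (h ((not_eventually.1 hev).mono fun _ => not_not.1) hb)

theorem isClosed_lamLs_iff_isUpperSet {B : Type*} [CompleteBooleanAlgebra B] (F : Set B) :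
    IsClosed[convTop lamLs] F ↔
      IsUpperSet F ∧ ∀ x : ℕ → B, (∀ n, x n ∈ F) → bLimsup x ∈ F := by
  rw [isClosed_convTop_iff]
  constructor
  · intro h
    refine ⟨fun a b hab ha => ?_, fun x hxF => ?_⟩
    · exact h _ (Frequently.of_forall fun _ => ha) ((bLimsup_const a).trans_le hab)
    · exact h x (Frequently.of_forall hxF) le_rfl
  · rintro ⟨hF, hlimsup⟩ x hx b hb
    have htail : bLimsup x ∈ F :=
      bLimsup_tailSup x ▸ hlimsup _ (hF.tailSup_mem hx)
    exact hF hb htail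

/-- A set `F` in a complete Boolean algebra is closed in `O_{λ_ls}` iff it is
upward closed and closed under infima of decreasing sequences, equivalently,
upward closed and closed under limsups of its sequences. -/
theorem isClosed_lamLs_iff {B : Type*} [CompleteBooleanAlgebra B] (F : Set B) :
    (@IsClosed B (convTop lamLs) F ↔
      ((∀ a b : B, a ∈ F → a ≤ b → b ∈ F) ∧
        ∀ x : ℕ → B, (∀ n, x n ∈ F) → Antitone x → (⨅ n, x n) ∈ F)) ∧
    (@IsClosed B (convTop lamLs) F ↔
      ((∀ a b : B, a ∈ F → a ≤ b → b ∈ F) ∧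
        ∀ x : ℕ → B, (∀ n, x n ∈ F) → bLimsup x ∈ F)) := by
  have hupper : IsUpperSet F ↔ ∀ a b : B, a ∈ F → a ≤ b → b ∈ F :=
    ⟨fun h _ _ ha hab => h hab ha, fun h a b hab ha => h a b ha hab⟩
  rw [isClosed_lamLs_iff_isUpperSet, ← hupper]
  exact ⟨and_congr_right IsUpperSet.forall_bLimsup_mem_iff, Iff.rfl⟩
end

section
/- For each a in a complete Boolean algebra B, the map f_a : B → B defined by f_a(x) = x ∧ a is continuous with respect to the topology O_{λ_ls}. -/
theorem continuous_of_mapsTo_convTop {X Y : Type*} {lam : (ℕ → X) → Set X}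
    {mu : (ℕ → Y) → Set Y} {f : X → Y} (hf : ∀ x, Set.MapsTo f (lam x) (mu (f ∘ x))) :
    @Continuous X Y (convTop lam) (convTop mu) f := by
  refine @continuous_def X Y (convTop lam) (convTop mu) f |>.2 fun O hO x ⟨b, hbO, hb⟩ => ?_
  exact hO (f ∘ x) ⟨f b, hbO, hf x hb⟩

section bLimsup

variable {B : Type*} [CompleteBooleanAlgebra B]

theorem bLimsup_mono {x y : ℕ → B} (h : ∀ n, x n ≤ y n) : bLimsup x ≤ bLimsup y :=
  iInf_mono fun _ => iSup_mono fun n => iSup_mono fun _ => h n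

theorem bLimsup_le_of_forall_le {x : ℕ → B} {c : B} (h : ∀ n, x n ≤ c) : bLimsup x ≤ c :=
  (iInf_le _ 0).trans <| iSup_le fun n => iSup_le fun _ => h n

theorem bLimsup_inf_le (x : ℕ → B) (a : B) :
    bLimsup (fun n => x n ⊓ a) ≤ bLimsup x ⊓ a :=
  le_inf (bLimsup_mono fun _ => inf_le_left) (bLimsup_le_of_forall_le fun _ => inf_le_right)

theorem mapsTo_inf_lamLs (x : ℕ → B) (a : B) :
    Set.MapsTo (· ⊓ a) (lamLs x) (lamLs fun n => x n ⊓ a) := fun _ hb =>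
  (bLimsup_inf_le x a).trans (inf_le_inf_right a hb)

end bLimsup

/-- For each `a`, the map `f_a(x) = x ∧ a` is continuous on `⟨B, O_{λ_ls}⟩`. -/
theorem continuous_inf_lamLs {B : Type*} [CompleteBooleanAlgebra B] (a : B) :
    @Continuous B B (convTop lamLs) (convTop lamLs) (fun x : B => x ⊓ a) :=
  continuous_of_mapsTo_convTop fun x => mapsTo_inf_lamLs x a
end

section
/- Let λ be a convergence on X satisfying (L1) and (L2). Define λ*(y) = ⋂_{f} ⋃_{g} λ(y∘f∘g), where f, g range over strictly increasing functions ω → ω. Then λ* satisfies (L1), (L2), and (L3) (if every subsequence y of x has a further subsequence z with a ∈ λ*(z), then a ∈ λ*(x)), λ ≤ λ*, and λ* is the minimal such extension: λ* ≤ μ for every convergence μ ≥ λ satisfying (L1)-(L3). -/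
/-- The (L3)-closure `λ*` of a convergence:
`λ*(y) = ⋂_f ⋃_g λ(y ∘ f ∘ g)` with `f, g` strictly increasing. -/
def lamStar {X : Type*} (lam : (ℕ → X) → Set X) (y : ℕ → X) : Set X :=
  {a : X | ∀ f : ℕ → ℕ, StrictMono f →
    ∃ g : ℕ → ℕ, StrictMono g ∧ a ∈ lam (y ∘ f ∘ g)}

section LamStar

variable {X : Type*} (lam : (ℕ → X) → Set X)

theorem mem_lamStar_const {a : X} (ha : a ∈ lam (fun _ => a)) :
    a ∈ lamStar lam (fun _ => a) :=
  fun _ _ => ⟨id, strictMono_id, ha⟩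

theorem lamStar_subset_lamStar_comp (x : ℕ → X) {f : ℕ → ℕ} (hf : StrictMono f) :
    lamStar lam x ⊆ lamStar lam (x ∘ f) :=
  fun _ ha f' hf' => ha (f ∘ f') (hf.comp hf')

theorem mem_lamStar_of_forall_subseq (x : ℕ → X) (a : X)
    (h : ∀ f : ℕ → ℕ, StrictMono f →
      ∃ g : ℕ → ℕ, StrictMono g ∧ a ∈ lamStar lam ((x ∘ f) ∘ g)) :
    a ∈ lamStar lam x := by
  intro f hf
  obtain ⟨g, hg, hag⟩ := h f hf
  obtain ⟨g', hg', hag'⟩ := hag id strictMono_id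
  exact ⟨g ∘ g', hg.comp hg', hag'⟩

theorem subset_lamStar
    (hL2 : ∀ (x : ℕ → X) (f : ℕ → ℕ), StrictMono f → lam x ⊆ lam (x ∘ f))
    (x : ℕ → X) : lam x ⊆ lamStar lam x :=
  fun _ ha f hf => ⟨id, strictMono_id, hL2 x f hf ha⟩

theorem lamStar_subset {mu : (ℕ → X) → Set X} (hle : ∀ x, lam x ⊆ mu x)
    (hL3 : ∀ (x : ℕ → X) (a : X),
      (∀ f : ℕ → ℕ, StrictMono f → ∃ g : ℕ → ℕ, StrictMono g ∧ a ∈ mu ((x ∘ f) ∘ g)) →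
      a ∈ mu x)
    (x : ℕ → X) : lamStar lam x ⊆ mu x := fun a ha =>
  hL3 x a fun f hf =>
    let ⟨g, hg, hag⟩ := ha f hf
    ⟨g, hg, hle _ hag⟩

end LamStar

/-- If `λ` satisfies (L1) and (L2), then `λ*` satisfies (L1)-(L3), extends `λ`,
and is the minimal convergence extending `λ` and satisfying (L1)-(L3). -/
theorem lamStar_minimal {X : Type*}
    (lam : (ℕ → X) → Set X)
    (hL1 : ∀ a : X, a ∈ lam (fun _ => a))
    (hL2 : ∀ (x : ℕ → X) (f : ℕ → ℕ), StrictMono f → lam x ⊆ lam (x ∘ f)) :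
    (∀ a : X, a ∈ lamStar lam (fun _ => a)) ∧
    (∀ (x : ℕ → X) (f : ℕ → ℕ), StrictMono f →
        lamStar lam x ⊆ lamStar lam (x ∘ f)) ∧
    (∀ (x : ℕ → X) (a : X),
        (∀ f : ℕ → ℕ, StrictMono f →
          ∃ g : ℕ → ℕ, StrictMono g ∧ a ∈ lamStar lam ((x ∘ f) ∘ g)) →
        a ∈ lamStar lam x) ∧
    (∀ x : ℕ → X, lam x ⊆ lamStar lam x) ∧
    (∀ mu : (ℕ → X) → Set X,
        (∀ x : ℕ → X, lam x ⊆ mu x) →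
        (∀ a : X, a ∈ mu (fun _ => a)) →
        (∀ (x : ℕ → X) (f : ℕ → ℕ), StrictMono f → mu x ⊆ mu (x ∘ f)) →
        (∀ (x : ℕ → X) (a : X),
          (∀ f : ℕ → ℕ, StrictMono f →
            ∃ g : ℕ → ℕ, StrictMono g ∧ a ∈ mu ((x ∘ f) ∘ g)) →
          a ∈ mu x) →
        ∀ x : ℕ → X, lamStar lam x ⊆ mu x) :=
  ⟨fun a => mem_lamStar_const lam (hL1 a),
    fun x _ hf => lamStar_subset_lamStar_comp lam x hf,
    mem_lamStar_of_forall_subseq lam,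
    subset_lamStar lam hL2,
    fun _ hle _ _ hL3 => lamStar_subset lam hle hL3⟩
end
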